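/- With the above notation, let m = (m_1,…,m_r) be a dominant tuple of integers and let 1 ≤ k ≤ r be such that m − e_k is dominant (i.e., m_k ≥ 1 and, if k < r, m_k > m_{k+1}). Then B(m,k) ≠ 0. -/

import Mathlib

open Finset

/-- A tuple of integers is dominant if its entries are weakly decreasing and nonnegative. -/
def Dominant {r : ℕ} (m : Fin r → ℤ) : Prop :=
  (∀ j k : Fin r, j ≤ k → m k ≤ m j) ∧ ∀ j : Fin r, 0 ≤ m j

instance {r : ℕ} (m : Fin r → ℤ) : Decidable (Dominant m) := by
  unfold Dominant; infer_instance

/-- The genus `p = (e+1) + (r-1)d + b/2`. -/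
noncomputable def genusP (r : ℕ) (b d e : ℝ) : ℝ := (e + 1) + ((r : ℝ) - 1) * d + b / 2

/-- `n = r(p + b/2)`. -/
noncomputable def dimN (r : ℕ) (b d e : ℝ) : ℝ := r * (genusP r b d e + b / 2)

/-- `ρ_k = (r-k)d/2 + e/2 + b/4` (1-indexed `k`). -/
noncomputable def rho (r : ℕ) (b d e : ℝ) (k : Fin r) : ℝ :=
  ((r : ℝ) - ((k : ℕ) + 1)) * d / 2 + e / 2 + b / 4

/-- The coefficient `A(m,k)`. -/
noncomputable def Acoef (r : ℕ) (b d e : ℝ) (m : Fin r → ℤ) (k : Fin r) : ℝ :=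
  (genusP r b d e / (2 * dimN r b d e)) *
    ((2 * ((m k : ℝ) + rho r b d e k) + b / 2 + 1) *
        (2 * ((m k : ℝ) + rho r b d e k) + b / 2 + e)) /
      ((2 * ((m k : ℝ) + rho r b d e k)) * (2 * ((m k : ℝ) + rho r b d e k) + 1)) *
    ∏ j ∈ univ.erase k,
      ((((m k : ℝ) + rho r b d e k) - ((m j : ℝ) + rho r b d e j) + d / 2) *
          (((m k : ℝ) + rho r b d e k) + ((m j : ℝ) + rho r b d e j) + d / 2)) /
        ((((m k : ℝ) + rho r b d e k) - ((m j : ℝ) + rho r b d e j)) *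
          (((m k : ℝ) + rho r b d e k) + ((m j : ℝ) + rho r b d e j)))

/-- The coefficient `B(m,k)`. -/
noncomputable def Bcoef (r : ℕ) (b d e : ℝ) (m : Fin r → ℤ) (k : Fin r) : ℝ :=
  (genusP r b d e / (2 * dimN r b d e)) *
    ((2 * ((m k : ℝ) + rho r b d e k) - b / 2 - 1) *
        (2 * ((m k : ℝ) + rho r b d e k) - b / 2 - e)) /
      ((2 * ((m k : ℝ) + rho r b d e k)) * (2 * ((m k : ℝ) + rho r b d e k) - 1)) *
    ∏ j ∈ univ.erase k,
      ((((m k : ℝ) + rho r b d e k) + ((m j : ℝ) + rho r b d e j) - d / 2) *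
          (((m k : ℝ) + rho r b d e k) - ((m j : ℝ) + rho r b d e j) - d / 2)) /
        ((((m k : ℝ) + rho r b d e k) + ((m j : ℝ) + rho r b d e j)) *
          (((m k : ℝ) + rho r b d e k) - ((m j : ℝ) + rho r b d e j)))

/-- The coefficient `C(m)`. -/
noncomputable def Ccoef (r : ℕ) (b d e : ℝ) (m : Fin r → ℤ) : ℝ :=
  1 - (∑ k ∈ univ.filter (fun k : Fin r =>
        Dominant (fun j => m j + if j = k then 1 else 0)), Acoef r b d e m k)
    - (∑ k ∈ univ.filter (fun k : Fin r =>
        Dominant (fun j => m j - if j = k then 1 else 0)), Bcoef r b d e m k)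

/-! Write `x_j = m_j + ρ_j`. Dominance of `m - e_k` gives `m_k ≥ 1`, so
`x_k ≥ 1 + e/2 + b/4` and the diagonal factor is positive. For `j ≠ k`, consecutive `ρ`'s
are `d/2` apart; with `m_j ≥ m_k` for `j < k` and `m_j < m_k` for `j > k` this puts
`x_k - x_j` outside `[0, d/2]`, while `x_k + x_j > d/2`. So every factor of `B(m,k)` is
positive. -/

lemma Bcoef_diag_factor_pos {x b e : ℝ} (hb : 0 ≤ b) (he : 0 ≤ e) (hx : 1 + e / 2 + b / 4 ≤ x) :
    0 < (2 * x - b / 2 - 1) * (2 * x - b / 2 - e) / (2 * x * (2 * x - 1)) := by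
  have h₁ : 0 < 2 * x - b / 2 - 1 := by linarith
  have h₂ : 0 < 2 * x - b / 2 - e := by linarith
  have h₃ : 0 < 2 * x := by linarith
  have h₄ : 0 < 2 * x - 1 := by linarith
  exact div_pos (mul_pos h₁ h₂) (mul_pos h₃ h₄)

lemma Bcoef_pair_factor_pos {x y d : ℝ} (hd : 0 ≤ d) (hsum : d / 2 < x + y)
    (hdiff : x - y < 0 ∨ d / 2 < x - y) :
    0 < (x + y - d / 2) * (x - y - d / 2) / ((x + y) * (x - y)) := by
  have hsum₀ : 0 < x + y - d / 2 := by linarith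
  have hsum₁ : 0 < x + y := by linarith
  rcases hdiff with hneg | hgt
  · exact div_pos_of_neg_of_neg (mul_neg_of_pos_of_neg hsum₀ (by linarith))
      (mul_neg_of_pos_of_neg hsum₁ hneg)
  · exact div_pos (mul_pos hsum₀ (by linarith)) (mul_pos hsum₁ (by linarith))

section

variable {r : ℕ} {b d e : ℝ}

lemma sub_mul_nonneg_of_le {i : ℕ} (hi : 1 ≤ i) (hir : i ≤ r) (hd : 1 < r → 0 ≤ d) :
    0 ≤ ((r : ℝ) - i) * d := by
  rcases hir.eq_or_lt with rfl | hlt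
  · simp
  · exact mul_nonneg (sub_nonneg.2 (by exact_mod_cast hlt.le)) (hd (by omega))

lemma genusP_pos (hr : 0 < r) (hb : 0 ≤ b) (he : 0 ≤ e) (hd : 1 < r → 0 ≤ d) :
    0 < genusP r b d e := by
  have := sub_mul_nonneg_of_le le_rfl hr hd
  rw [genusP]
  push_cast at this
  linarith

lemma dimN_pos (hr : 0 < r) (hb : 0 ≤ b) (he : 0 ≤ e) (hd : 1 < r → 0 ≤ d) :
    0 < dimN r b d e := by
  have := genusP_pos hr hb he hd
  rw [dimN]
  positivity

lemma le_rho (hd : 1 < r → 0 ≤ d) (j : Fin r) : e / 2 + b / 4 ≤ rho r b d e j := by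
  have := sub_mul_nonneg_of_le (Nat.le_add_left 1 j) j.isLt hd
  rw [rho]
  push_cast at this
  linarith

lemma rho_sub_rho (j k : Fin r) :
    rho r b d e k - rho r b d e j = ((j : ℝ) - k) * d / 2 := by
  simp only [rho]
  ring

lemma le_rho_add_rho (hd : 0 ≤ d) {j k : Fin r} (hjk : j ≠ k) :
    d / 2 + e + b / 2 ≤ rho r b d e k + rho r b d e j := by
  have hjk' : (j : ℝ) + k + 3 ≤ 2 * r := by
    have := Fin.val_ne_of_ne hjk
    exact_mod_cast (by omega : (j : ℕ) + k + 3 ≤ 2 * r)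
  have : 0 ≤ (2 * (r : ℝ) - j - k - 3) * d := mul_nonneg (by linarith) hd
  simp only [rho]
  linarith

noncomputable def shifted (r : ℕ) (b d e : ℝ) (m : Fin r → ℤ) (j : Fin r) : ℝ :=
  m j + rho r b d e j

variable {m : Fin r → ℤ}

lemma Bcoef_eq_shifted (k : Fin r) :
    Bcoef r b d e m k = genusP r b d e / (2 * dimN r b d e) *
      ((2 * shifted r b d e m k - b / 2 - 1) * (2 * shifted r b d e m k - b / 2 - e) /
        (2 * shifted r b d e m k * (2 * shifted r b d e m k - 1))) *
      ∏ j ∈ univ.erase k,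
        (shifted r b d e m k + shifted r b d e m j - d / 2) *
            (shifted r b d e m k - shifted r b d e m j - d / 2) /
          ((shifted r b d e m k + shifted r b d e m j) *
            (shifted r b d e m k - shifted r b d e m j)) := by
  rw [Bcoef, mul_div_assoc]
  rfl

lemma one_add_le_shifted (hd : 1 < r → 0 ≤ d) {k : Fin r} (hmk : 1 ≤ m k) :
    1 + e / 2 + b / 4 ≤ shifted r b d e m k := by
  have hmk' : (1 : ℝ) ≤ m k := by exact_mod_cast hmk
  have := le_rho (b := b) (e := e) hd k
  rw [shifted]
  linarith

lemma shifted_sub_shifted (j k : Fin r) :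
    shifted r b d e m k - shifted r b d e m j = (m k - m j) + ((j : ℝ) - k) * d / 2 := by
  rw [shifted, shifted, ← rho_sub_rho]
  ring

lemma shifted_sub_shifted_neg (hd : 0 < d) {j k : Fin r} (hjk : j < k) (hm : m k ≤ m j) :
    shifted r b d e m k - shifted r b d e m j < 0 := by
  have hm' : (m k : ℝ) ≤ m j := by exact_mod_cast hm
  have hjk' : ((j : ℕ) : ℝ) < k := by exact_mod_cast hjk
  have : ((j : ℝ) - k) * d < 0 := mul_neg_of_neg_of_pos (by linarith) hd
  rw [shifted_sub_shifted]
  linarith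

lemma half_lt_shifted_sub_shifted (hd : 0 ≤ d) {j k : Fin r} (hkj : k < j) (hm : m j < m k) :
    d / 2 < shifted r b d e m k - shifted r b d e m j := by
  have hm' : (m j : ℝ) + 1 ≤ m k := by exact_mod_cast hm
  have hkj' : ((k : ℕ) : ℝ) + 1 ≤ j := by exact_mod_cast hkj
  have : d ≤ ((j : ℝ) - k) * d := le_mul_of_one_le_left hd (by linarith)
  rw [shifted_sub_shifted]
  linarith

lemma half_lt_shifted_add_shifted (hb : 0 ≤ b) (he : 0 ≤ e) (hd : 0 ≤ d) {j k : Fin r}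
    (hjk : j ≠ k) (hmk : 0 < m k) (hmj : 0 ≤ m j) :
    d / 2 < shifted r b d e m k + shifted r b d e m j := by
  have hmk' : (0 : ℝ) < m k := by exact_mod_cast hmk
  have hmj' : (0 : ℝ) ≤ m j := by exact_mod_cast hmj
  have := le_rho_add_rho (b := b) (e := e) hd hjk
  rw [shifted, shifted]
  linarith

end

lemma one_le_of_dominant_sub {r : ℕ} {m : Fin r → ℤ} {k : Fin r}
    (hk : Dominant (fun j => m j - if j = k then 1 else 0)) : 1 ≤ m k := by
  have := hk.2 k
  simp only [ite_true, sub_nonneg] at this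
  exact this

lemma lt_of_dominant_sub {r : ℕ} {m : Fin r → ℤ} {j k : Fin r}
    (hk : Dominant (fun j => m j - if j = k then 1 else 0)) (hkj : k < j) : m j < m k := by
  have := hk.1 k j hkj.le
  simp only [ite_true, if_neg hkj.ne', sub_zero] at this
  omega

theorem Bcoef_ne_zero_of_dominant_sub_general (r : ℕ) (b d e : ℝ)
    (hb : 1 ≤ b) (he : 0 ≤ e) (hd : 1 < r → 1 ≤ d)
    (m : Fin r → ℤ) (hm : Dominant m) (k : Fin r)
    (hk : Dominant (fun j => m j - if j = k then 1 else 0)) :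
    Bcoef r b d e m k ≠ 0 := by
  have hb₀ : 0 ≤ b := by linarith
  have hd₀ : 1 < r → 0 ≤ d := fun h => zero_le_one.trans (hd h)
  have hmk := one_le_of_dominant_sub hk
  refine ne_of_gt ?_
  rw [Bcoef_eq_shifted]
  refine mul_pos (mul_pos ?_ (Bcoef_diag_factor_pos hb₀ he (one_add_le_shifted hd₀ hmk)))
    (prod_pos fun j hj => ?_)
  · exact div_pos (genusP_pos k.pos hb₀ he hd₀) (mul_pos two_pos (dimN_pos k.pos hb₀ he hd₀))
  have hjk : j ≠ k := ne_of_mem_erase hj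
  have hd₁ : 1 ≤ d := hd (Fin.nontrivial_iff_two_le.1 (nontrivial_of_ne j k hjk))
  refine Bcoef_pair_factor_pos (by linarith)
    (half_lt_shifted_add_shifted hb₀ he (by linarith) hjk (by omega) (hm.2 j)) ?_
  rcases hjk.lt_or_gt with hlt | hgt
  · exact Or.inl (shifted_sub_shifted_neg (by linarith) hlt (hm.1 j k hlt.le))
  · exact Or.inr (half_lt_shifted_sub_shifted (by linarith) hgt (lt_of_dominant_sub hk hgt))

theorem Bcoef_ne_zero_of_dominant_sub (r : ℕ) (hr : 1 ≤ r) (b d e : ℝ)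
    (hb : 1 ≤ b) (he : 0 ≤ e) (hd : 1 < r → 1 ≤ d)
    (m : Fin r → ℤ) (hm : Dominant m) (k : Fin r)
    (hk : Dominant (fun j => m j - if j = k then 1 else 0)) :
    Bcoef r b d e m k ≠ 0 :=
  Bcoef_ne_zero_of_dominant_sub_general r b d e hb he hd m hm k hk
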